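/- arXiv:2207.11272 — 3 statements merged into one kernel-verified Lean document; each statement's English description precedes it below -/
import Mathlib

section
/- Let D = C₃ be the directed 3-cycle on vertices {1,2,3} with arcs (1,2), (2,3), (3,1) (semi-restricted Rock, Paper, Scissors). Then the greedy strategy R_g is an optimal strategy for Rei, and it is the unique optimal strategy: every optimal strategy R for Rei satisfies R(r) = R_g(r) for every nonzero restriction vector r. -/
open Finset

/-- A digraph: finite vertex set, no loops, at most one arc per pair. -/
structure Digraph' (V : Type) where
  Adj : V → V → Bool
  irrefl : ∀ v, Adj v v = false
  asymm : ∀ u v, Adj u v = true → Adj v u = false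

namespace Digraph'

variable {V : Type} [Fintype V] [DecidableEq V] (D : Digraph' V)

/-- Out-neighborhood N⁺(v). -/
def outN (v : V) : Finset V := univ.filter fun u => D.Adj v u
/-- In-neighborhood N⁻(v). -/
def inN (v : V) : Finset V := univ.filter fun u => D.Adj u v

/-- max over vertices v of Σ_{u∈N⁺(v)} p u − Σ_{u∈N⁻(v)} p u. -/
noncomputable def payoff (p : V → ℝ) : ℝ :=
  sSup (Set.range fun v => (∑ u ∈ D.outN v, p u) - ∑ u ∈ D.inN v, p u)

/-- Auxiliary (fuel-indexed) definition of the value of the semi-restricted D-game. -/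
noncomputable def valueAux : ℕ → (V → ℕ) → ℝ
  | 0, _ => 0
  | (n+1), r =>
    if ∀ u, r u = 0 then 0
    else sInf { x : ℝ | ∃ p : V → ℝ, (∀ u, 0 ≤ p u) ∧ (∑ u, p u = 1) ∧
      (∀ u, p u ≠ 0 → r u ≠ 0) ∧
      x = D.payoff p + ∑ u, p u * valueAux n (fun w => r w - if w = u then 1 else 0) }

/-- The value S_D(r) of the semi-restricted D-game with restriction vector r. -/
noncomputable def value (r : V → ℕ) : ℝ := D.valueAux (∑ u, r u) r

end Digraph'

/-- A strategy for Rei in the semi-restricted D-game. -/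
structure ReiStrategy {V : Type} [Fintype V] [DecidableEq V] (D : Digraph' V) where
  play : (V → ℕ) → V → ℝ
  nonneg : ∀ r : V → ℕ, (¬ ∀ u, r u = 0) → ∀ u, 0 ≤ play r u
  sum_one : ∀ r : V → ℕ, (¬ ∀ u, r u = 0) → ∑ u, play r u = 1
  supp : ∀ r : V → ℕ, (¬ ∀ u, r u = 0) → ∀ u, play r u ≠ 0 → r u ≠ 0

namespace Digraph'

variable {V : Type} [Fintype V] [DecidableEq V] (D : Digraph' V)

/-- Auxiliary (fuel-indexed) value of Rei's strategy R. -/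
noncomputable def stratValueAux (R : ReiStrategy D) : ℕ → (V → ℕ) → ℝ
  | 0, _ => 0
  | (n+1), r =>
    if ∀ u, r u = 0 then 0
    else D.payoff (R.play r) +
      ∑ u, R.play r u * stratValueAux R n (fun w => r w - if w = u then 1 else 0)

/-- The value S_D(r; R) of Rei's strategy R at restriction vector r. -/
noncomputable def stratValue (R : ReiStrategy D) (r : V → ℕ) : ℝ :=
  D.stratValueAux R (∑ u, r u) r

/-- A strategy for Rei is optimal if its value equals the game value at every restriction vector. -/
def IsOptimal (R : ReiStrategy D) : Prop := ∀ r : V → ℕ, D.stratValue R r = D.value r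

/-- A strategy is oblivious if it only depends on the support of the restriction vector. -/
def IsOblivious (R : ReiStrategy D) : Prop :=
  ∀ r r' : V → ℕ, (∀ u, r u ≠ 0 ↔ r' u ≠ 0) → R.play r = R.play r'

/-- A digraph is oblivious if Rei has an oblivious optimal strategy. -/
def Oblivious : Prop := ∃ R : ReiStrategy D, D.IsOptimal R ∧ D.IsOblivious R

/-- A tournament: exactly one arc between any two distinct vertices. -/
def IsTournament : Prop := ∀ u v : V, u ≠ v → (D.Adj u v = true ∨ D.Adj v u = true)

/-- Eulerian: every vertex has equal in- and out-degree. -/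
def IsEulerian : Prop := ∀ v : V, (D.outN v).card = (D.inN v).card

/-- The skew adjacency matrix of a digraph. -/
def skewAdj : Matrix V V ℝ := fun u v =>
  if D.Adj u v then 1 else if D.Adj v u then -1 else 0

end Digraph'
/-- The directed 3-cycle 0 → 1 → 2 → 0 (Rock, Paper, Scissors). -/
def C3 : Digraph' (Fin 3) where
  Adj i j := decide (j = i + 1)
  irrefl := by decide
  asymm := by decide

/-- The greedy strategy for Rei in semi-restricted RPS: with all three options,
play each with probability 1/3; with two options, play the one beating the other
with probability 2/3; with one option, play it with probability 1. -/
noncomputable def greedyPlay (r : Fin 3 → ℕ) (u : Fin 3) : ℝ :=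
  if r u = 0 then 0
  else if r (u + 1) ≠ 0 then (if r (u + 2) ≠ 0 then 1/3 else 2/3)
  else if r (u + 2) ≠ 0 then 1/3 else 1

/-! The value `G` of the greedy strategy satisfies an explicit three-variable recursion.
At every nonzero `r` it is a Bellman fixed point with a unique minimiser: for an admissible `p`,
`payoff p + ∑ u, p u * G (r - δ_u)` exceeds `G r` by `∑ v, λ v * (payoff p - score p v)` for
weights `λ ≥ 0` with `G (r - δ_u) = G r - λ (u + 2) + λ (u + 1)` on the support (an LP dual
certificate), so equality forces every vertex with `λ v > 0` to attain the payoff, which pins `p`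
down to the greedy move. The weights are positive where needed because
`G (r - δ_u) - G (r - δ_(u+1)) ∈ (-2, 1)`. Induction on `∑ r` then identifies the game value
with `greedyValue`, and an optimal strategy has to play the unique minimiser. -/

def consume {V : Type} [DecidableEq V] (r : V → ℕ) (u : V) : V → ℕ :=
  fun w => r w - if w = u then 1 else 0

def IsAdmissible {V : Type} [Fintype V] (r : V → ℕ) (p : V → ℝ) : Prop :=
  (∀ u, 0 ≤ p u) ∧ ∑ u, p u = 1 ∧ ∀ u, p u ≠ 0 → r u ≠ 0

@[simp] lemma consume_self {V : Type} [DecidableEq V] (r : V → ℕ) (u : V) :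
    consume r u u = r u - 1 := by
  simp [consume]

lemma consume_of_ne {V : Type} [DecidableEq V] (r : V → ℕ) {u w : V} (h : w ≠ u) :
    consume r u w = r w := by
  simp [consume, h]

lemma sum_consume_add_one {V : Type} [Fintype V] [DecidableEq V] {r : V → ℕ} {u : V}
    (hu : r u ≠ 0) : ∑ w, consume r u w + 1 = ∑ w, r w := by
  have hrest : ∑ w ∈ Finset.univ.erase u, consume r u w = ∑ w ∈ Finset.univ.erase u, r w :=
    Finset.sum_congr rfl fun w hw => consume_of_ne r (Finset.ne_of_mem_erase hw)
  rw [← Finset.add_sum_erase _ _ (Finset.mem_univ u),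
    ← Finset.add_sum_erase _ _ (Finset.mem_univ u), hrest, consume_self]
  omega

lemma IsAdmissible.eq_zero {V : Type} [Fintype V] {r : V → ℕ} {p : V → ℝ}
    (hp : IsAdmissible r p) {u : V} (hu : r u = 0) : p u = 0 :=
  not_imp_not.1 (hp.2.2 u) hu

lemma ReiStrategy.isAdmissible {V : Type} [Fintype V] [DecidableEq V] {D : Digraph' V}
    (R : ReiStrategy D) {r : V → ℕ} (hr : ¬ ∀ u, r u = 0) : IsAdmissible r (R.play r) :=
  ⟨R.nonneg r hr, R.sum_one r hr, R.supp r hr⟩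

namespace Digraph'

section Payoff

variable {V : Type} [Fintype V] (D : Digraph' V)

def score (p : V → ℝ) (v : V) : ℝ := (∑ u ∈ D.outN v, p u) - ∑ u ∈ D.inN v, p u

lemma score_le_payoff (p : V → ℝ) (v : V) : D.score p v ≤ D.payoff p :=
  le_csSup (Set.finite_range _).bddAbove ⟨v, rfl⟩

lemma payoff_eq_of_forall_score_le {p : V → ℝ} {x : ℝ} (hle : ∀ v, D.score p v ≤ x)
    (v : V) (hv : D.score p v = x) : D.payoff p = x :=
  IsGreatest.csSup_eq ⟨⟨v, hv⟩, by rintro _ ⟨w, rfl⟩; exact hle w⟩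

end Payoff

variable {V : Type} [Fintype V] [DecidableEq V] (D : Digraph' V)

noncomputable def bellman (G : (V → ℕ) → ℝ) (r : V → ℕ) (p : V → ℝ) : ℝ :=
  D.payoff p + ∑ u, p u * G (consume r u)

variable {D}

lemma bellman_congr {F G : (V → ℕ) → ℝ} {r : V → ℕ} {p : V → ℝ}
    (h : ∀ u, p u ≠ 0 → F (consume r u) = G (consume r u)) :
    D.bellman F r p = D.bellman G r p := by
  unfold bellman
  congr 1
  refine Finset.sum_congr rfl fun u _ => ?_
  by_cases hu : p u = 0
  · simp [hu]
  · rw [h u hu]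

lemma value_eq_sInf {r : V → ℕ} (hr : ¬ ∀ u, r u = 0) :
    D.value r = sInf (D.bellman D.value r '' {p | IsAdmissible r p}) := by
  obtain ⟨n, hn⟩ : ∃ n, ∑ u, r u = n + 1 :=
    Nat.exists_eq_add_one.mpr (Nat.pos_of_ne_zero fun h => hr (by simpa using h))
  rw [value, hn, valueAux, if_neg hr]
  congr 1
  ext x
  constructor
  · rintro ⟨p, hp0, hp1, hps, rfl⟩
    refine ⟨p, ⟨hp0, hp1, hps⟩, bellman_congr fun u hu => ?_⟩
    have := sum_consume_add_one (hps u hu)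
    rw [value, show ∑ w, consume r u w = n by omega]
  · rintro ⟨p, ⟨hp0, hp1, hps⟩, rfl⟩
    refine ⟨p, hp0, hp1, hps, bellman_congr fun u hu => ?_⟩
    have := sum_consume_add_one (hps u hu)
    rw [value, show ∑ w, consume r u w = n by omega]

lemma stratValue_eq_zero (R : ReiStrategy D) {r : V → ℕ} (hr : ∀ u, r u = 0) :
    D.stratValue R r = 0 := by
  rw [stratValue, show ∑ u, r u = 0 by simp [hr], stratValueAux]

lemma stratValue_eq_bellman (R : ReiStrategy D) {r : V → ℕ} (hr : ¬ ∀ u, r u = 0) :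
    D.stratValue R r = D.bellman (D.stratValue R) r (R.play r) := by
  obtain ⟨n, hn⟩ : ∃ n, ∑ u, r u = n + 1 :=
    Nat.exists_eq_add_one.mpr (Nat.pos_of_ne_zero fun h => hr (by simpa using h))
  rw [stratValue, hn, stratValueAux, if_neg hr]
  refine bellman_congr fun u hu => ?_
  have := sum_consume_add_one (R.supp r hr u hu)
  rw [stratValue, show ∑ w, consume r u w = n by omega]

theorem value_eq_of_isLeast {G : (V → ℕ) → ℝ} (h0 : ∀ r, (∀ u, r u = 0) → G r = 0)
    (hG : ∀ r, (¬ ∀ u, r u = 0) → IsLeast (D.bellman G r '' {p | IsAdmissible r p}) (G r)) :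
    D.value = G := by
  funext r
  induction hn : ∑ u, r u using Nat.strong_induction_on generalizing r with
  | _ n ih =>
    by_cases hr : ∀ u, r u = 0
    · rw [h0 r hr, value, show ∑ u, r u = 0 by simp [hr], valueAux]
    rw [value_eq_sInf hr, ← (hG r hr).csInf_eq]
    congr 1
    refine Set.image_congr fun p hp => bellman_congr fun u hu => ?_
    have := sum_consume_add_one (hp.2.2 u hu)
    exact ih _ (by omega) _ rfl

theorem stratValue_eq_of_bellman (R : ReiStrategy D) {G : (V → ℕ) → ℝ}
    (h0 : ∀ r, (∀ u, r u = 0) → G r = 0)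
    (hG : ∀ r, (¬ ∀ u, r u = 0) → G r = D.bellman G r (R.play r)) :
    D.stratValue R = G := by
  funext r
  induction hn : ∑ u, r u using Nat.strong_induction_on generalizing r with
  | _ n ih =>
    by_cases hr : ∀ u, r u = 0
    · rw [h0 r hr, stratValue_eq_zero R hr]
    rw [stratValue_eq_bellman R hr, hG r hr]
    refine bellman_congr fun u hu => ?_
    have := sum_consume_add_one (R.supp r hr u hu)
    exact ih _ (by omega) _ rfl

end Digraph'

namespace Fin3

variable (u : Fin 3)

@[simp] lemma add_one_add_one : u + 1 + 1 = u + 2 := by revert u; decide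
@[simp] lemma add_one_add_two : u + 1 + 2 = u := by revert u; decide
@[simp] lemma add_two_add_one : u + 2 + 1 = u := by revert u; decide
@[simp] lemma add_two_add_two : u + 2 + 2 = u + 1 := by revert u; decide
@[simp] lemma add_one_ne_self : u + 1 ≠ u := by revert u; decide
@[simp] lemma add_two_ne_self : u + 2 ≠ u := by revert u; decide
@[simp] lemma add_two_ne_add_one : u + 2 ≠ u + 1 := by revert u; decide

lemma eq_or_eq_add_one_or_eq_add_two (v : Fin 3) : v = u ∨ v = u + 1 ∨ v = u + 2 := by
  revert u v; decide

lemma forall_iff {P : Fin 3 → Prop} : (∀ v, P v) ↔ P u ∧ P (u + 1) ∧ P (u + 2) := by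
  refine ⟨fun h => ⟨h _, h _, h _⟩, fun ⟨h0, h1, h2⟩ v => ?_⟩
  rcases eq_or_eq_add_one_or_eq_add_two u v with rfl | rfl | rfl <;> assumption

lemma sum_eq {M : Type*} [AddCommMonoid M] (f : Fin 3 → M) :
    ∑ v, f v = f u + f (u + 1) + f (u + 2) := by
  rw [Fin.sum_univ_three]
  fin_cases u <;> simp <;> abel

def vec (a b c : ℝ) : Fin 3 → ℝ := fun v => if v = u then a else if v = u + 1 then b else c

variable {u} {a b c : ℝ}

@[simp] lemma vec_self : vec u a b c u = a := by simp [vec]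
@[simp] lemma vec_add_one : vec u a b c (u + 1) = b := by simp [vec]
@[simp] lemma vec_add_two : vec u a b c (u + 2) = c := by simp [vec]

lemma eq_vec_iff {p : Fin 3 → ℝ} :
    p = vec u a b c ↔ p u = a ∧ p (u + 1) = b ∧ p (u + 2) = c := by
  rw [funext_iff, forall_iff u]
  simp

end Fin3

lemma C3_outN (v : Fin 3) : C3.outN v = {v + 1} := by fin_cases v <;> decide

lemma C3_inN (v : Fin 3) : C3.inN v = {v + 2} := by fin_cases v <;> decide

lemma C3_score (p : Fin 3 → ℝ) (v : Fin 3) : C3.score p v = p (v + 1) - p (v + 2) := by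
  simp [Digraph'.score, C3_outN, C3_inN]

theorem C3_bellman_certificate {G : (Fin 3 → ℕ) → ℝ} {r : Fin 3 → ℕ} {lam p : Fin 3 → ℝ}
    (hlam : ∀ v, 0 ≤ lam v) (hlam1 : ∑ v, lam v = 1) (hp : ∑ u, p u = 1)
    (hG : ∀ u, p u ≠ 0 → G (consume r u) = G r - lam (u + 2) + lam (u + 1)) :
    G r ≤ C3.bellman G r p ∧
      (C3.bellman G r p = G r ↔ ∀ v, 0 < lam v → C3.score p v = C3.payoff p) := by
  have hpG : ∀ u, p u * G (consume r u) = p u * (G r - lam (u + 2) + lam (u + 1)) := fun u => by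
    by_cases h : p u = 0
    · simp [h]
    · rw [hG u h]
  have hid : C3.bellman G r p = G r + ∑ v, lam v * (C3.payoff p - C3.score p v) := by
    simp only [Digraph'.bellman, hpG, C3_score, Fin.sum_univ_three] at hlam1 hp ⊢
    simp only [Fin.isValue, Fin.reduceAdd]
    linear_combination (-C3.payoff p) * hlam1 + G r * hp
  have hterm : ∀ v, 0 ≤ lam v * (C3.payoff p - C3.score p v) := fun v =>
    mul_nonneg (hlam v) (sub_nonneg.2 (C3.score_le_payoff p v))
  refine ⟨by rw [hid]; linarith [Finset.sum_nonneg fun v (_ : v ∈ Finset.univ) => hterm v],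
    ?_⟩
  rw [hid, add_eq_left, Finset.sum_eq_zero_iff_of_nonneg fun v _ => hterm v]
  refine forall_congr' fun v => ?_
  simp only [Finset.mem_univ, true_implies, mul_eq_zero, sub_eq_zero]
  exact ⟨fun h hv => (h.resolve_left hv.ne').symm,
    fun h => (hlam v).eq_or_lt.imp Eq.symm fun hv => (h hv).symm⟩

-- `greedyValue3 a b c`: the greedy strategy's value with `a`, `b`, `c` copies of `0`, `1`, `2`.
noncomputable def greedyValue3 : ℕ → ℕ → ℕ → ℝ
  | 0, 0, 0 => 0
  | a + 1, 0, 0 => a + 1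
  | 0, b + 1, 0 => b + 1
  | 0, 0, c + 1 => c + 1
  | a + 1, b + 1, 0 => 1/3 + 2/3 * greedyValue3 a (b + 1) 0 + 1/3 * greedyValue3 (a + 1) b 0
  | 0, b + 1, c + 1 => 1/3 + 2/3 * greedyValue3 0 b (c + 1) + 1/3 * greedyValue3 0 (b + 1) c
  | a + 1, 0, c + 1 => 1/3 + 2/3 * greedyValue3 (a + 1) 0 c + 1/3 * greedyValue3 a 0 (c + 1)
  | a + 1, b + 1, c + 1 => 1/3 * greedyValue3 a (b + 1) (c + 1)
      + 1/3 * greedyValue3 (a + 1) b (c + 1) + 1/3 * greedyValue3 (a + 1) (b + 1) c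
termination_by a b c => a + b + c

theorem greedyValue3_rotate : ∀ a b c : ℕ, greedyValue3 a b c = greedyValue3 b c a
  | 0, 0, 0 | a + 1, 0, 0 | 0, b + 1, 0 | 0, 0, c + 1 => by simp [greedyValue3]
  | a + 1, b + 1, 0 => by
    rw [greedyValue3, greedyValue3, greedyValue3_rotate a, greedyValue3_rotate (a + 1) b]
  | 0, b + 1, c + 1 => by
    rw [greedyValue3, greedyValue3, greedyValue3_rotate 0 b, greedyValue3_rotate 0 (b + 1)]
  | a + 1, 0, c + 1 => by
    rw [greedyValue3, greedyValue3, greedyValue3_rotate (a + 1) 0, greedyValue3_rotate a 0]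
  | a + 1, b + 1, c + 1 => by
    rw [greedyValue3, greedyValue3, greedyValue3_rotate a, greedyValue3_rotate (a + 1) b,
      greedyValue3_rotate (a + 1) (b + 1)]
    ring
termination_by a b c => a + b + c

lemma greedyValue3_single (a : ℕ) : greedyValue3 a 0 0 = a := by
  cases a <;> simp [greedyValue3]

lemma greedyValue3_one_left (b : ℕ) : greedyValue3 1 b 0 = b + (1/3 : ℝ) ^ b := by
  induction b with
  | zero => norm_num [greedyValue3]
  | succ b ih =>
    rw [greedyValue3, ih, greedyValue3_rotate 0 (b + 1), greedyValue3_single]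
    push_cast; ring

lemma greedyValue3_one_mid (a : ℕ) : greedyValue3 a 1 0 = a - 1 + 2 * (2/3 : ℝ) ^ a := by
  induction a with
  | zero => norm_num [greedyValue3]
  | succ a ih =>
    rw [greedyValue3, ih, greedyValue3_single]
    push_cast; ring

noncomputable def greedyGap (a b c : ℕ) : ℝ :=
  greedyValue3 a (b + 1) c - greedyValue3 (a + 1) b c

lemma greedyGap_zero_zero (c : ℕ) :
    greedyGap 0 0 c = 1 + (1/3 : ℝ) ^ c - 2 * (2/3 : ℝ) ^ c := by
  rw [greedyGap, greedyValue3_rotate 0 1, greedyValue3_rotate 1 0, greedyValue3_rotate 0 c,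
    greedyValue3_one_left, greedyValue3_one_mid]
  ring

lemma greedyGap_succ_zero_zero (a : ℕ) : greedyGap (a + 1) 0 0 = 2/3 * greedyGap a 0 0 - 2/3 := by
  simp only [greedyGap, greedyValue3, greedyValue3_single]
  push_cast; ring

lemma greedyGap_zero_succ_zero (b : ℕ) : greedyGap 0 (b + 1) 0 = 2/3 + 1/3 * greedyGap 0 b 0 := by
  simp only [greedyGap, greedyValue3]
  push_cast; ring

lemma greedyGap_succ_succ_zero (a b : ℕ) :
    greedyGap (a + 1) (b + 1) 0 = 2/3 * greedyGap a (b + 1) 0 + 1/3 * greedyGap (a + 1) b 0 := by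
  simp only [greedyGap, greedyValue3]
  ring

lemma greedyGap_zero_succ_succ (b c : ℕ) :
    greedyGap 0 (b + 1) (c + 1) =
      1/3 + 1/3 * greedyGap 0 b (c + 1) + 1/3 * greedyGap 0 (b + 1) c := by
  simp only [greedyGap, greedyValue3]
  ring

lemma greedyGap_succ_zero_succ (a c : ℕ) :
    greedyGap (a + 1) 0 (c + 1) =
      1/3 * greedyGap a 0 (c + 1) + 1/3 * greedyGap (a + 1) 0 c
        - 1/3 * greedyGap c (a + 1) 0 - 1/3 := by
  simp only [greedyGap]
  rw [greedyValue3.eq_8 a 0 c, greedyValue3.eq_7 (a + 1) c, greedyValue3_rotate (a + 1 + 1) 0 c,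
    greedyValue3_rotate 0 c, greedyValue3_rotate (a + 1) 0 (c + 1), greedyValue3_rotate 0 (c + 1)]
  ring

lemma greedyGap_succ_succ_succ (a b c : ℕ) :
    greedyGap (a + 1) (b + 1) (c + 1) =
      1/3 * greedyGap a (b + 1) (c + 1) + 1/3 * greedyGap (a + 1) b (c + 1)
        + 1/3 * greedyGap (a + 1) (b + 1) c := by
  simp only [greedyGap, greedyValue3]
  ring

theorem greedyGap_bounds : ∀ a b c : ℕ, -2 < greedyGap a b c ∧ greedyGap a b c < 1
  | 0, 0, c => by
    have h₁ : (0 : ℝ) < (1/3) ^ c := by positivity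
    have h₂ : (1/3 : ℝ) ^ c ≤ (2/3) ^ c := pow_le_pow_left₀ (by norm_num) (by norm_num) c
    have h₃ : (2/3 : ℝ) ^ c ≤ 1 := pow_le_one₀ (by norm_num) (by norm_num)
    rw [greedyGap_zero_zero]
    constructor <;> linarith
  | a + 1, 0, 0 => by
    have := greedyGap_bounds a 0 0
    rw [greedyGap_succ_zero_zero]
    constructor <;> linarith
  | 0, b + 1, 0 => by
    have := greedyGap_bounds 0 b 0
    rw [greedyGap_zero_succ_zero]
    constructor <;> linarith
  | a + 1, b + 1, 0 => by
    have h₁ := greedyGap_bounds a (b + 1) 0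
    have h₂ := greedyGap_bounds (a + 1) b 0
    rw [greedyGap_succ_succ_zero]
    constructor <;> linarith
  | 0, b + 1, c + 1 => by
    have h₁ := greedyGap_bounds 0 b (c + 1)
    have h₂ := greedyGap_bounds 0 (b + 1) c
    rw [greedyGap_zero_succ_succ]
    constructor <;> linarith
  | a + 1, 0, c + 1 => by
    have h₁ := greedyGap_bounds a 0 (c + 1)
    have h₂ := greedyGap_bounds (a + 1) 0 c
    have h₃ := greedyGap_bounds c (a + 1) 0
    rw [greedyGap_succ_zero_succ]
    constructor <;> linarith
  | a + 1, b + 1, c + 1 => by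
    have h₁ := greedyGap_bounds a (b + 1) (c + 1)
    have h₂ := greedyGap_bounds (a + 1) b (c + 1)
    have h₃ := greedyGap_bounds (a + 1) (b + 1) c
    rw [greedyGap_succ_succ_succ]
    constructor <;> linarith
termination_by a b c => a + b + c

noncomputable def greedyValue (r : Fin 3 → ℕ) : ℝ := greedyValue3 (r 0) (r 1) (r 2)

lemma greedyValue_eq (r : Fin 3 → ℕ) (u : Fin 3) :
    greedyValue r = greedyValue3 (r u) (r (u + 1)) (r (u + 2)) := by
  fin_cases u
  · rfl
  · exact greedyValue3_rotate _ _ _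
  · exact (greedyValue3_rotate _ _ _).symm

lemma greedyValue_zero {r : Fin 3 → ℕ} (hr : ∀ u, r u = 0) : greedyValue r = 0 := by
  simp [greedyValue, hr, greedyValue3]

lemma greedyValue_consume (r : Fin 3 → ℕ) (u : Fin 3) :
    greedyValue (consume r u) = greedyValue3 (r u - 1) (r (u + 1)) (r (u + 2)) := by
  rw [greedyValue_eq _ u, consume_self, consume_of_ne r (Fin3.add_one_ne_self u),
    consume_of_ne r (Fin3.add_two_ne_self u)]

lemma greedyValue_consume_add_one (r : Fin 3 → ℕ) (u : Fin 3) :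
    greedyValue (consume r (u + 1)) = greedyValue3 (r u) (r (u + 1) - 1) (r (u + 2)) := by
  rw [greedyValue_eq _ u, consume_self, consume_of_ne r (Fin3.add_one_ne_self u).symm,
    consume_of_ne r (Fin3.add_two_ne_add_one u)]

lemma greedyValue_consume_of_single {r : Fin 3 → ℕ} {u : Fin 3} (hu : r u ≠ 0)
    (h1 : r (u + 1) = 0) (h2 : r (u + 2) = 0) : greedyValue (consume r u) = greedyValue r - 1 := by
  obtain ⟨a, ha⟩ := Nat.exists_eq_add_one_of_ne_zero hu
  rw [greedyValue_consume, greedyValue_eq r u, ha, h1, h2, greedyValue3_single, greedyValue3_single]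
  push_cast; ring

lemma greedyValue_of_pair {r : Fin 3 → ℕ} {u : Fin 3} (hu : r u ≠ 0) (h1 : r (u + 1) ≠ 0)
    (h2 : r (u + 2) = 0) :
    greedyValue r =
      1/3 + 2/3 * greedyValue (consume r u) + 1/3 * greedyValue (consume r (u + 1)) := by
  obtain ⟨a, ha⟩ := Nat.exists_eq_add_one_of_ne_zero hu
  obtain ⟨b, hb⟩ := Nat.exists_eq_add_one_of_ne_zero h1
  rw [greedyValue_consume, greedyValue_consume_add_one, greedyValue_eq r u, ha, hb, h2,
    greedyValue3.eq_5]
  rfl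

lemma greedyValue_of_full {r : Fin 3 → ℕ} (hr : ∀ u, r u ≠ 0) :
    greedyValue r = (∑ u, greedyValue (consume r u)) / 3 := by
  obtain ⟨a, ha⟩ := Nat.exists_eq_add_one_of_ne_zero (hr 0)
  obtain ⟨b, hb⟩ := Nat.exists_eq_add_one_of_ne_zero (hr 1)
  obtain ⟨c, hc⟩ := Nat.exists_eq_add_one_of_ne_zero (hr 2)
  simp only [greedyValue, consume, Fin.sum_univ_three, ha, hb, hc, Fin.isValue, Fin.reduceEq,
    if_true, if_false]
  rw [greedyValue3.eq_8]
  simp only [add_tsub_cancel_right, tsub_zero]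
  ring

lemma greedyValue_gap {r : Fin 3 → ℕ} {u : Fin 3} (hu : r u ≠ 0)
    (h1 : r (u + 1) ≠ 0) :
    -2 < greedyValue (consume r u) - greedyValue (consume r (u + 1)) ∧
      greedyValue (consume r u) - greedyValue (consume r (u + 1)) < 1 := by
  obtain ⟨a, ha⟩ := Nat.exists_eq_add_one_of_ne_zero hu
  obtain ⟨b, hb⟩ := Nat.exists_eq_add_one_of_ne_zero h1
  rw [greedyValue_consume, greedyValue_consume_add_one, ha, hb]
  exact greedyGap_bounds a b _

lemma greedyPlay_of_single {r : Fin 3 → ℕ} {u : Fin 3} (hu : r u ≠ 0) (h1 : r (u + 1) = 0)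
    (h2 : r (u + 2) = 0) : greedyPlay r = Fin3.vec u 1 0 0 := by
  rw [Fin3.eq_vec_iff]
  simp [greedyPlay, hu, h1, h2]

lemma greedyPlay_of_pair {r : Fin 3 → ℕ} {u : Fin 3} (hu : r u ≠ 0) (h1 : r (u + 1) ≠ 0)
    (h2 : r (u + 2) = 0) : greedyPlay r = Fin3.vec u (2/3) (1/3) 0 := by
  rw [Fin3.eq_vec_iff]
  simp [greedyPlay, hu, h1, h2]

lemma greedyPlay_of_full {r : Fin 3 → ℕ} (hr : ∀ u, r u ≠ 0) :
    greedyPlay r = fun _ => 1/3 := by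
  funext u
  simp [greedyPlay, hr]

lemma Fin3.support_cases {r : Fin 3 → ℕ} (hr : ¬ ∀ u, r u = 0) :
    (∃ u, r u ≠ 0 ∧ r (u + 1) = 0 ∧ r (u + 2) = 0) ∨
      (∃ u, r u ≠ 0 ∧ r (u + 1) ≠ 0 ∧ r (u + 2) = 0) ∨ ∀ u, r u ≠ 0 := by
  rw [Fin3.forall_iff 0] at hr
  rw [Fin3.forall_iff 0]
  simp only [Fin.isValue, zero_add] at hr ⊢
  rcases eq_or_ne (r 0) 0 with h0 | h0 <;> rcases eq_or_ne (r 1) 0 with h1 | h1 <;>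
    rcases eq_or_ne (r 2) 0 with h2 | h2
  · exact absurd ⟨h0, h1, h2⟩ hr
  · exact Or.inl ⟨2, by simp [h0, h1, h2]⟩
  · exact Or.inl ⟨1, by simp [h0, h1, h2]⟩
  · exact Or.inr (Or.inl ⟨1, by simp [h0, h1, h2]⟩)
  · exact Or.inl ⟨0, by simp [h0, h1, h2]⟩
  · exact Or.inr (Or.inl ⟨2, by simp [h0, h1, h2]⟩)
  · exact Or.inr (Or.inl ⟨0, by simp [h0, h1, h2]⟩)
  · exact Or.inr (Or.inr ⟨h0, h1, h2⟩)

lemma greedyPlay_isAdmissible {r : Fin 3 → ℕ} (hr : ¬ ∀ u, r u = 0) :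
    IsAdmissible r (greedyPlay r) := by
  refine ⟨fun u => by unfold greedyPlay; split_ifs <;> norm_num, ?_,
    fun u h h0 => h (by simp [greedyPlay, h0])⟩
  rcases Fin3.support_cases hr with ⟨u, hu, h1, h2⟩ | ⟨u, hu, h1, h2⟩ | hr
  · rw [greedyPlay_of_single hu h1 h2, Fin3.sum_eq u]; simp
  · rw [greedyPlay_of_pair hu h1 h2, Fin3.sum_eq u]; norm_num
  · rw [greedyPlay_of_full hr, Fin.sum_univ_three]; norm_num

section Shapes

variable {r : Fin 3 → ℕ} {p : Fin 3 → ℝ}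

lemma bellman_greedyValue_of_single {u : Fin 3} (hu : r u ≠ 0) (h1 : r (u + 1) = 0)
    (h2 : r (u + 2) = 0) (hp : IsAdmissible r p) :
    greedyValue r ≤ C3.bellman greedyValue r p ∧
      (C3.bellman greedyValue r p = greedyValue r ↔ p = greedyPlay r) := by
  have hpu : p = Fin3.vec u 1 0 0 := by
    have hsum := hp.2.1
    rw [Fin3.sum_eq u, hp.eq_zero h1, hp.eq_zero h2] at hsum
    rw [Fin3.eq_vec_iff]
    exact ⟨by linarith, hp.eq_zero h1, hp.eq_zero h2⟩
  obtain ⟨hle, hiff⟩ := C3_bellman_certificate (G := greedyValue) (r := r)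
    (lam := Fin3.vec u 0 0 1) (by simp [Fin3.forall_iff u]) (by simp [Fin3.sum_eq u]) hp.2.1 (by
      rw [Fin3.forall_iff u]
      simp [hpu, greedyValue_consume_of_single hu h1 h2])
  refine ⟨hle, ?_⟩
  have hpay : C3.payoff p = 1 :=
    C3.payoff_eq_of_forall_score_le (by simp [Fin3.forall_iff u, C3_score, hpu]) (u + 2)
      (by simp [C3_score, hpu])
  rw [hiff, greedyPlay_of_single hu h1 h2, iff_true_right hpu, hpay, Fin3.forall_iff u]
  simp [C3_score, hpu]

lemma bellman_greedyValue_of_pair {u : Fin 3} (hu : r u ≠ 0) (h1 : r (u + 1) ≠ 0)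
    (h2 : r (u + 2) = 0) (hp : IsAdmissible r p) :
    greedyValue r ≤ C3.bellman greedyValue r p ∧
      (C3.bellman greedyValue r p = greedyValue r ↔ p = greedyPlay r) := by
  set c₀ := greedyValue (consume r u)
  set c₁ := greedyValue (consume r (u + 1))
  have hgap := greedyValue_gap hu h1
  have hrec := greedyValue_of_pair hu h1 h2
  have hp2 := hp.eq_zero h2
  have hsum := hp.2.1
  rw [Fin3.sum_eq u, hp2] at hsum
  obtain ⟨hle, hiff⟩ := C3_bellman_certificate (G := greedyValue) (r := r)
    (lam := Fin3.vec u ((2 + c₀ - c₁) / 3) 0 ((1 + c₁ - c₀) / 3))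
    (by rw [Fin3.forall_iff u]; simp only [Fin3.vec_self, Fin3.vec_add_one, Fin3.vec_add_two]
        refine ⟨?_, le_rfl, ?_⟩ <;> linarith)
    (by rw [Fin3.sum_eq u]; simp only [Fin3.vec_self, Fin3.vec_add_one, Fin3.vec_add_two]; ring)
    hp.2.1 (by
      rw [Fin3.forall_iff u]
      simp only [Fin3.add_one_add_one, Fin3.add_one_add_two, Fin3.add_two_add_one,
        Fin3.add_two_add_two, Fin3.vec_self, Fin3.vec_add_one, Fin3.vec_add_two, hp2]
      exact ⟨fun _ => by linarith, fun _ => by linarith, fun h => absurd rfl h⟩)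
  refine ⟨hle, ?_⟩
  rw [hiff, greedyPlay_of_pair hu h1 h2, Fin3.forall_iff u, Fin3.eq_vec_iff]
  simp only [Fin3.vec_self, Fin3.vec_add_one, Fin3.vec_add_two, lt_self_iff_false,
    false_implies, true_and, C3_score, Fin3.add_one_add_one, Fin3.add_two_add_one,
    Fin3.add_two_add_two, hp2]
  constructor
  · rintro ⟨hscore, hscore₂⟩
    have := (hscore (by linarith)).trans (hscore₂ (by linarith)).symm
    exact ⟨by linarith, by linarith, trivial⟩
  · rintro ⟨hpu, hpu1, -⟩
    have hpay : C3.payoff p = 1/3 :=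
      C3.payoff_eq_of_forall_score_le
        (by rw [Fin3.forall_iff u]; simp [C3_score, hpu, hpu1, hp2]; norm_num) u
        (by simp [C3_score, hpu1, hp2])
    rw [hpay, hpu, hpu1]
    norm_num

lemma bellman_greedyValue_of_full (hr : ∀ u, r u ≠ 0) (hp : IsAdmissible r p) :
    greedyValue r ≤ C3.bellman greedyValue r p ∧
      (C3.bellman greedyValue r p = greedyValue r ↔ p = greedyPlay r) := by
  set c := fun w => greedyValue (consume r w)
  have hgap (v : Fin 3) : c (v + 1) - c (v + 2) < 1 := by
    simpa using (greedyValue_gap (hr (v + 1)) (hr (v + 1 + 1))).2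
  obtain ⟨hle, hiff⟩ := C3_bellman_certificate (G := greedyValue) (r := r)
    (lam := fun v => (1 + c (v + 2) - c (v + 1)) / 3)
    (fun v => by have := hgap v; linarith)
    (by simp only [Fin.sum_univ_three, Fin.isValue, Fin.reduceAdd]; ring)
    hp.2.1 (fun u _ => by
      have hrec := greedyValue_of_full hr
      rw [Fin3.sum_eq u] at hrec
      simp only [c, Fin3.add_two_add_two, Fin3.add_two_add_one, Fin3.add_one_add_one,
        Fin3.add_one_add_two]
      linarith)
  refine ⟨hle, ?_⟩
  rw [hiff, greedyPlay_of_full hr]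
  have hsum := hp.2.1
  rw [Fin.sum_univ_three] at hsum
  constructor
  · intro h
    have h0 := h 0 (by have := hgap 0; linarith)
    have h1 := h 1 (by have := hgap 1; linarith)
    have h2 := h 2 (by have := hgap 2; linarith)
    simp only [C3_score, Fin.isValue, Fin.reduceAdd] at h0 h1 h2
    funext v
    fin_cases v <;> simp <;> linarith
  · rintro rfl
    have hpay : C3.payoff (fun _ => 1/3) = 0 :=
      C3.payoff_eq_of_forall_score_le (fun v => by simp [C3_score]) 0 (by simp [C3_score])
    intro v _
    rw [hpay, C3_score, sub_self]

theorem bellman_greedyValue (hr : ¬ ∀ u, r u = 0) (hp : IsAdmissible r p) :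
    greedyValue r ≤ C3.bellman greedyValue r p ∧
      (C3.bellman greedyValue r p = greedyValue r ↔ p = greedyPlay r) := by
  rcases Fin3.support_cases hr with ⟨u, hu, h1, h2⟩ | ⟨u, hu, h1, h2⟩ | hfull
  exacts [bellman_greedyValue_of_single hu h1 h2 hp, bellman_greedyValue_of_pair hu h1 h2 hp,
    bellman_greedyValue_of_full hfull hp]

end Shapes

lemma bellman_greedyPlay {r : Fin 3 → ℕ} (hr : ¬ ∀ u, r u = 0) :
    C3.bellman greedyValue r (greedyPlay r) = greedyValue r :=
  (bellman_greedyValue hr (greedyPlay_isAdmissible hr)).2.2 rfl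

theorem C3_value_eq_greedyValue : C3.value = greedyValue :=
  Digraph'.value_eq_of_isLeast (fun _ => greedyValue_zero) fun _ hr =>
    ⟨⟨_, greedyPlay_isAdmissible hr, bellman_greedyPlay hr⟩,
      by rintro _ ⟨p, hp, rfl⟩; exact (bellman_greedyValue hr hp).1⟩

noncomputable def greedyStrategy : ReiStrategy C3 where
  play := greedyPlay
  nonneg _ hr := (greedyPlay_isAdmissible hr).1
  sum_one _ hr := (greedyPlay_isAdmissible hr).2.1
  supp _ hr := (greedyPlay_isAdmissible hr).2.2

theorem C3_stratValue_greedyStrategy : C3.stratValue greedyStrategy = greedyValue :=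
  Digraph'.stratValue_eq_of_bellman _ (fun _ => greedyValue_zero) fun _ hr =>
    (bellman_greedyPlay hr).symm

theorem semiRestrictedRPS_greedy_unique_optimal :
    ∃ Rg : ReiStrategy C3, (∀ r : Fin 3 → ℕ, Rg.play r = greedyPlay r) ∧
      C3.IsOptimal Rg ∧
      ∀ R : ReiStrategy C3, C3.IsOptimal R →
        ∀ r : Fin 3 → ℕ, (¬ ∀ u, r u = 0) → R.play r = greedyPlay r := by
  refine ⟨greedyStrategy, fun _ => rfl, fun r => ?_, fun R hR r hr => ?_⟩
  · rw [C3_stratValue_greedyStrategy, C3_value_eq_greedyValue]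
  · have hR' : C3.stratValue R = greedyValue := (funext hR).trans C3_value_eq_greedyValue
    have hbellman := C3.stratValue_eq_bellman R hr
    rw [hR'] at hbellman
    exact (bellman_greedyValue hr (R.isAdmissible hr)).2.1 hbellman.symm
end

section
/- Let D = C₃ be the directed 3-cycle on vertices {1,2,3} with arcs (1,2), (2,3), (3,1). There exist constants c, C > 0 such that for every integer n ≥ 1, c·√n ≤ S_D(n·1) ≤ C·√n, where n·1 is the restriction vector giving each vertex the value n. -/
/-!
Both bounds come from potentials checked one move at a time. Write `s` for the total of `r`, `Q`
for the sum of the squared differences of its coordinates and `m` for its minimum. Decrementing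
coordinate `u` lowers `s` by one and raises `Q` by `2 + 2 η_u`, where `η_u = s - 3 r_u` has mean
zero under the uniform move; against any move `p` the opponent has a reply gaining at least
`|p_u - 1/3|`, for every `u`.

Upper bound: `min s √(4s + 2Q)`. While all coordinates are positive, Rei plays uniformly, loses
nothing, and concavity of `√` bounds the mean of `√(4s + 2Q)`; once a coordinate is zero,
`s ≤ √(4s + 2Q)` and losing at most one per move is enough.

Lower bound: `max (√(s + Q) / 12) ((s - 3m) / 6)`. The second term drops by at most `1/6` per move
and rises by `1/3` when a smallest coordinate `w` is decremented, and the payoff is at least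
`max 0 (1/3 - p_w)`. For the first term, `√(t² + 1 + 2η) ≥ t + η / t` when `|η| ≤ t`, so its mean
drops by at most `|∑ p_u η_u| / (12 t) = |∑ (p_u - 1/3) η_u| / (12 t)`, which the payoff covers as
long as `2 (s - 3m) ≤ t`; otherwise the second term dominates.
-/

open Finset

lemma sum_mul_sqrt_le_sqrt_sum_mul {ι : Type*} (s : Finset ι) {w x : ι → ℝ}
    (hw : ∀ i ∈ s, 0 ≤ w i) (hw1 : ∑ i ∈ s, w i = 1) (hx : ∀ i ∈ s, 0 ≤ x i) :
    ∑ i ∈ s, w i * √(x i) ≤ √(∑ i ∈ s, w i * x i) :=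
  Real.strictConcaveOn_sqrt.concaveOn.le_map_sum hw hw1 hx

lemma add_div_le_sqrt {t η : ℝ} (ht : 0 < t) (hη : |η| ≤ t) :
    t + η / t ≤ √(t ^ 2 + 1 + 2 * η) := by
  refine (le_abs_self _).trans (Real.abs_le_sqrt ?_)
  have hsq : (η / t) ^ 2 ≤ 1 := by
    rw [div_pow, div_le_one (by positivity)]
    exact sq_le_sq' (abs_le.1 hη).1 (abs_le.1 hη).2
  have hexp : (t + η / t) ^ 2 = t ^ 2 + 2 * η + (η / t) ^ 2 := by field_simp; ring
  linarith

namespace Digraph'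

lemma cast_sub_single_apply {V : Type} [DecidableEq V] {r : V → ℕ} {u : V} (hu : r u ≠ 0)
    (w : V) :
    (((r - Pi.single u 1 : V → ℕ) w : ℕ) : ℝ) = r w - if w = u then 1 else 0 := by
  rcases eq_or_ne w u with rfl | h
  · simp [Nat.cast_sub (Nat.one_le_iff_ne_zero.2 hu)]
  · simp [h]

variable {V : Type} [Fintype V]

structure IsMove (r : V → ℕ) (p : V → ℝ) : Prop where
  nonneg : ∀ u, 0 ≤ p u
  sum_eq_one : ∑ u, p u = 1
  supp : ∀ u, p u ≠ 0 → r u ≠ 0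

lemma IsMove.sum_mul_le_sum_mul {r : V → ℕ} {p : V → ℝ} (hp : IsMove r p) {f g : V → ℝ}
    (hfg : ∀ u, r u ≠ 0 → f u ≤ g u) : ∑ u, p u * f u ≤ ∑ u, p u * g u := by
  refine sum_le_sum fun u _ => ?_
  by_cases hpu : p u = 0
  · simp [hpu]
  · exact mul_le_mul_of_nonneg_left (hfg u (hp.supp u hpu)) (hp.nonneg u)

variable (D : Digraph' V)

lemma le_payoff (p : V → ℝ) (v : V) :
    (∑ u ∈ D.outN v, p u) - ∑ u ∈ D.inN v, p u ≤ D.payoff p :=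
  le_csSup (Set.finite_range _).bddAbove ⟨v, rfl⟩

lemma payoff_le [Nonempty V] {p : V → ℝ} {x : ℝ}
    (h : ∀ v, (∑ u ∈ D.outN v, p u) - ∑ u ∈ D.inN v, p u ≤ x) : D.payoff p ≤ x :=
  csSup_le (Set.range_nonempty _) (Set.forall_mem_range.2 h)

lemma sum_mul_payoffs_eq_zero (p : V → ℝ) :
    ∑ v, p v * ((∑ u ∈ D.outN v, p u) - ∑ u ∈ D.inN v, p u) = 0 := by
  -- each arc `(v, u)` contributes `p v * p u` once with each sign
  simp only [mul_sub, sum_sub_distrib, mul_sum, outN, inN, sum_filter]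
  rw [sub_eq_zero, sum_comm]
  refine sum_congr rfl fun v _ => sum_congr rfl fun u _ => ?_
  split_ifs <;> ring

lemma payoff_nonneg {r : V → ℕ} {p : V → ℝ} (hp : IsMove r p) : 0 ≤ D.payoff p :=
  calc 0 = ∑ v, p v * ((∑ u ∈ D.outN v, p u) - ∑ u ∈ D.inN v, p u) :=
        (D.sum_mul_payoffs_eq_zero p).symm
    _ ≤ ∑ v, p v * D.payoff p :=
        sum_le_sum fun v _ => mul_le_mul_of_nonneg_left (D.le_payoff p v) (hp.nonneg v)
    _ = D.payoff p := by rw [← sum_mul, hp.sum_eq_one, one_mul]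

lemma payoff_le_one [Nonempty V] {r : V → ℕ} {p : V → ℝ} (hp : IsMove r p) : D.payoff p ≤ 1 :=
  D.payoff_le fun v => by
    have hout : ∑ u ∈ D.outN v, p u ≤ 1 :=
      hp.sum_eq_one ▸ sum_le_univ_sum_of_nonneg hp.nonneg
    have hin : 0 ≤ ∑ u ∈ D.inN v, p u := sum_nonneg fun u _ => hp.nonneg u
    linarith

variable [DecidableEq V]

lemma isMove_single {r : V → ℕ} {u : V} (hu : r u ≠ 0) : IsMove r (Pi.single u 1) where
  nonneg w := by rcases eq_or_ne w u with rfl | h <;> simp [*]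
  sum_eq_one := by simp
  supp w hw := by rcases eq_or_ne w u with rfl | h <;> simp_all

lemma sum_sub_single_add_one {r : V → ℕ} {u : V} (hu : r u ≠ 0) :
    ∑ w, (r - Pi.single u 1 : V → ℕ) w + 1 = ∑ w, r w := by
  have hle : ∀ w ∈ univ, (Pi.single u 1 : V → ℕ) w ≤ r w := fun w _ => by
    rcases eq_or_ne w u with rfl | h <;> simp [*, Nat.one_le_iff_ne_zero]
  simp only [Pi.sub_apply]
  rw [sum_tsub_distrib _ hle, sum_pi_single']
  have : 1 ≤ ∑ w, r w := (Nat.one_le_iff_ne_zero.2 hu).trans (single_le_sum (by simp) (mem_univ u))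
  simp; omega

lemma valueAux_succ {r : V → ℕ} (hr : r ≠ 0) (n : ℕ) :
    D.valueAux (n + 1) r = sInf {x | ∃ p, IsMove r p ∧
      x = D.payoff p + ∑ u, p u * D.valueAux n (r - Pi.single u 1)} := by
  have hsub : ∀ u, (fun w => r w - if w = u then 1 else 0) = r - Pi.single u 1 := fun u => by
    funext w; simp [Pi.single_apply]
  rw [valueAux, if_neg (by simpa [funext_iff] using hr)]
  simp only [hsub]
  congr 1
  ext x
  exact ⟨fun ⟨p, h0, h1, h2, hx⟩ => ⟨p, ⟨h0, h1, h2⟩, hx⟩,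
    fun ⟨p, ⟨h0, h1, h2⟩, hx⟩ => ⟨p, h0, h1, h2, hx⟩⟩

lemma valueAux_nonneg (n : ℕ) (r : V → ℕ) : 0 ≤ D.valueAux n r := by
  induction n generalizing r with
  | zero => exact le_rfl
  | succ n ih =>
    rcases eq_or_ne r 0 with rfl | hr
    · simp [valueAux]
    rw [D.valueAux_succ hr]
    refine Real.sInf_nonneg ?_
    rintro x ⟨p, hp, rfl⟩
    exact add_nonneg (D.payoff_nonneg hp)
      (sum_nonneg fun u _ => mul_nonneg (hp.nonneg u) (ih _))

lemma valueAux_succ_le {r : V → ℕ} (hr : r ≠ 0) {p : V → ℝ} (hp : IsMove r p) (n : ℕ) :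
    D.valueAux (n + 1) r ≤ D.payoff p + ∑ u, p u * D.valueAux n (r - Pi.single u 1) := by
  rw [D.valueAux_succ hr]
  refine csInf_le ⟨0, ?_⟩ ⟨p, hp, rfl⟩
  rintro x ⟨q, hq, rfl⟩
  exact add_nonneg (D.payoff_nonneg hq)
    (sum_nonneg fun u _ => mul_nonneg (hq.nonneg u) (D.valueAux_nonneg _ _))

lemma le_valueAux_succ {r : V → ℕ} (hr : r ≠ 0) {x : ℝ} (n : ℕ)
    (h : ∀ p, IsMove r p → x ≤ D.payoff p + ∑ u, p u * D.valueAux n (r - Pi.single u 1)) :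
    x ≤ D.valueAux (n + 1) r := by
  obtain ⟨u, hu⟩ := Function.ne_iff.1 hr
  rw [D.valueAux_succ hr]
  refine le_csInf ⟨_, _, isMove_single hu, rfl⟩ ?_
  rintro y ⟨p, hp, rfl⟩
  exact h p hp

lemma value_le_of_potential (Ψ : (V → ℕ) → ℝ) (hΨ : ∀ r, 0 ≤ Ψ r)
    (hstep : ∀ r ≠ 0, ∃ p, IsMove r p ∧
      D.payoff p + ∑ u, p u * Ψ (r - Pi.single u 1) ≤ Ψ r) (r : V → ℕ) :
    D.value r ≤ Ψ r := by
  suffices ∀ n r, D.valueAux n r ≤ Ψ r from this _ r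
  intro n
  induction n with
  | zero => exact hΨ
  | succ n ih =>
    intro r
    rcases eq_or_ne r 0 with rfl | hr
    · simpa [valueAux] using hΨ 0
    obtain ⟨p, hp, hΨr⟩ := hstep r hr
    calc D.valueAux (n + 1) r
        ≤ D.payoff p + ∑ u, p u * D.valueAux n (r - Pi.single u 1) := D.valueAux_succ_le hr hp n
      _ ≤ D.payoff p + ∑ u, p u * Ψ (r - Pi.single u 1) :=
        add_le_add le_rfl (hp.sum_mul_le_sum_mul fun u _ => ih _)
      _ ≤ Ψ r := hΨr

lemma le_value_of_potential (Φ : (V → ℕ) → ℝ) (hΦ : Φ 0 ≤ 0)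
    (hstep : ∀ r ≠ 0, ∀ p, IsMove r p →
      Φ r ≤ D.payoff p + ∑ u, p u * Φ (r - Pi.single u 1)) (r : V → ℕ) :
    Φ r ≤ D.value r := by
  suffices ∀ n r, ∑ u, r u = n → Φ r ≤ D.valueAux n r from this _ r rfl
  intro n
  induction n with
  | zero =>
    intro r hr
    obtain rfl : r = 0 := funext fun u => sum_eq_zero_iff.1 hr u (mem_univ u)
    exact hΦ
  | succ n ih =>
    intro r hr
    have hr0 : r ≠ 0 := by rintro rfl; simp at hr
    refine D.le_valueAux_succ hr0 n fun p hp => (hstep r hr0 p hp).trans ?_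
    refine add_le_add le_rfl (hp.sum_mul_le_sum_mul fun u hu => ih _ ?_)
    have := sum_sub_single_add_one hu
    omega

end Digraph'

namespace RPS

open Digraph' (IsMove cast_sub_single_apply)

lemma outN_C3 (v : Fin 3) : C3.outN v = {v + 1} := by revert v; decide

lemma inN_C3 (v : Fin 3) : C3.inN v = {v + 2} := by revert v; decide

lemma sub_le_payoff (p : Fin 3 → ℝ) (v : Fin 3) : p (v + 1) - p (v + 2) ≤ C3.payoff p := by
  simpa [outN_C3, inN_C3] using C3.le_payoff p v

lemma abs_sub_third_le_payoff {p : Fin 3 → ℝ} (hp : ∑ u, p u = 1) (v : Fin 3) :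
    |p v - 1 / 3| ≤ C3.payoff p := by
  have h0 := sub_le_payoff p 0
  have h1 := sub_le_payoff p 1
  have h2 := sub_le_payoff p 2
  rw [Fin.sum_univ_three] at hp
  rw [abs_le]
  fin_cases v <;> simp at h0 h1 h2 ⊢ <;> constructor <;> linarith

noncomputable def total (r : Fin 3 → ℕ) : ℝ := ∑ u, (r u : ℝ)

noncomputable def spread (r : Fin 3 → ℕ) : ℝ :=
  ((r 0 : ℝ) - r 1) ^ 2 + ((r 1 : ℝ) - r 2) ^ 2 + ((r 2 : ℝ) - r 0) ^ 2

noncomputable def deficit (r : Fin 3 → ℕ) (v : Fin 3) : ℝ := total r - 3 * r v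

def minCoord (r : Fin 3 → ℕ) : ℕ := univ.inf' univ_nonempty r

noncomputable def imbalance (r : Fin 3 → ℕ) : ℝ := total r - 3 * minCoord r

noncomputable def energy (r : Fin 3 → ℕ) : ℝ := total r + spread r

variable {r : Fin 3 → ℕ} {p : Fin 3 → ℝ}

lemma total_nonneg (r : Fin 3 → ℕ) : 0 ≤ total r := by unfold total; positivity

lemma spread_nonneg (r : Fin 3 → ℕ) : 0 ≤ spread r := by unfold spread; positivity

lemma total_sub_single {v : Fin 3} (hv : r v ≠ 0) : total (r - Pi.single v 1) = total r - 1 := by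
  have := congrArg (Nat.cast (R := ℝ)) (Digraph'.sum_sub_single_add_one hv)
  push_cast at this
  unfold total
  linarith

lemma spread_sub_single {v : Fin 3} (hv : r v ≠ 0) :
    spread (r - Pi.single v 1) = spread r + 2 + 2 * deficit r v := by
  simp only [spread, deficit, total, Fin.sum_univ_three, cast_sub_single_apply hv]
  fin_cases v <;> simp <;> ring

lemma energy_sub_single {v : Fin 3} (hv : r v ≠ 0) :
    energy (r - Pi.single v 1) = energy r + 1 + 2 * deficit r v := by
  rw [energy, energy, total_sub_single hv, spread_sub_single hv]
  ring

lemma sum_deficit (r : Fin 3 → ℕ) : ∑ v, deficit r v = 0 := by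
  simp [deficit, total, Fin.sum_univ_three]

lemma minCoord_le (r : Fin 3 → ℕ) (v : Fin 3) : minCoord r ≤ r v := inf'_le _ (mem_univ v)

lemma exists_eq_minCoord (r : Fin 3 → ℕ) : ∃ v, r v = minCoord r := by
  obtain ⟨v, -, hv⟩ := exists_mem_eq_inf' univ_nonempty r
  exact ⟨v, hv.symm⟩

lemma abs_deficit_le (r : Fin 3 → ℕ) (v : Fin 3) : |deficit r v| ≤ 2 * imbalance r := by
  have hm : ∀ w, (minCoord r : ℝ) ≤ r w := fun w => by exact_mod_cast minCoord_le r w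
  have h0 := hm 0
  have h1 := hm 1
  have h2 := hm 2
  rw [abs_le]
  fin_cases v <;> simp [deficit, imbalance, total, Fin.sum_univ_three] <;> constructor <;> linarith

lemma imbalance_sub_single_ge {v w : Fin 3} (hv : r v ≠ 0) (hw : r w = minCoord r) :
    imbalance r - 1 + (if w = v then 3 else 0) ≤ imbalance (r - Pi.single v 1) := by
  have hmin : (minCoord (r - Pi.single v 1) : ℝ) ≤ ((r - Pi.single v 1 : Fin 3 → ℕ) w : ℝ) := by
    exact_mod_cast minCoord_le _ w
  rw [cast_sub_single_apply hv, hw] at hmin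
  unfold imbalance
  rw [total_sub_single hv]
  split_ifs at hmin ⊢ <;> linarith

lemma total_pos (hr : r ≠ 0) : 0 < total r := by
  obtain ⟨u, hu⟩ := Function.ne_iff.1 hr
  have h1 : (1 : ℝ) ≤ r u := by exact_mod_cast Nat.one_le_iff_ne_zero.2 hu
  have h2 : (r u : ℝ) ≤ total r :=
    single_le_sum (fun w _ => Nat.cast_nonneg (r w)) (mem_univ u)
  linarith

noncomputable def upperPot (r : Fin 3 → ℕ) : ℝ := min (total r) √(4 * total r + 2 * spread r)

lemma upperPot_nonneg (r : Fin 3 → ℕ) : 0 ≤ upperPot r :=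
  le_min (total_nonneg r) (Real.sqrt_nonneg _)

lemma sq_total_le_two_mul_spread {v : Fin 3} (hv : r v = 0) : total r ^ 2 ≤ 2 * spread r := by
  fin_cases v <;> simp only [total, spread, Fin.sum_univ_three] <;> simp at hv <;> rw [hv] <;>
    push_cast <;> nlinarith [sq_nonneg ((r 0 : ℝ) - r 1), sq_nonneg ((r 1 : ℝ) - r 2),
      sq_nonneg ((r 2 : ℝ) - r 0)]

lemma upperPot_eq_total {v : Fin 3} (hv : r v = 0) : upperPot r = total r := by
  have hsq : total r ^ 2 ≤ 4 * total r + 2 * spread r := by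
    linarith [total_nonneg r, sq_total_le_two_mul_spread hv]
  exact min_eq_left ((Real.le_sqrt (total_nonneg r) ((sq_nonneg _).trans hsq)).2 hsq)

lemma upperPot_sub_single {u : Fin 3} (hu : r u ≠ 0) :
    upperPot (r - Pi.single u 1) =
      min (total r - 1) √(4 * total r + 2 * spread r + 4 * deficit r u) := by
  rw [upperPot, total_sub_single hu, spread_sub_single hu]
  ring_nf

lemma upperPot_step_of_eq_zero {u v : Fin 3} (hu : r u ≠ 0) (hv : r v = 0) :
    C3.payoff (Pi.single u 1) + ∑ w, (Pi.single u 1 : Fin 3 → ℝ) w * upperPot (r - Pi.single w 1)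
      ≤ upperPot r := by
  have hp : IsMove r (Pi.single u 1) := Digraph'.isMove_single hu
  calc _ ≤ 1 + ∑ w, (Pi.single u 1 : Fin 3 → ℝ) w * (total r - 1) :=
        add_le_add (C3.payoff_le_one hp) (hp.sum_mul_le_sum_mul fun w hw =>
          (upperPot_sub_single hw).trans_le (min_le_left _ _))
    _ = upperPot r := by rw [← sum_mul, hp.sum_eq_one, upperPot_eq_total hv]; ring

lemma upperPot_step_of_forall_ne_zero (hr : ∀ v, r v ≠ 0) :
    C3.payoff (fun _ => 1 / 3) + ∑ u, 1 / 3 * upperPot (r - Pi.single u 1) ≤ upperPot r := by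
  set X := 4 * total r + 2 * spread r
  have hpay : C3.payoff (fun _ => 1 / 3) ≤ 0 := C3.payoff_le fun v => by simp [outN_C3, inN_C3]
  have hX : ∀ u, 0 ≤ X + 4 * deficit r u := fun u => by
    have := total_nonneg (r - Pi.single u 1)
    have := spread_nonneg (r - Pi.single u 1)
    rw [total_sub_single (hr u), spread_sub_single (hr u)] at *
    linarith
  have hjensen : ∑ u, 1 / 3 * √(X + 4 * deficit r u) ≤ √X := by
    refine (sum_mul_sqrt_le_sqrt_sum_mul _ (fun _ _ => by norm_num) (by simp)
      fun u _ => hX u).trans_eq ?_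
    simp only [mul_add, sum_add_distrib, ← mul_sum, sum_deficit]
    simp
  have hsum : ∑ u, 1 / 3 * upperPot (r - Pi.single u 1) ≤ upperPot r := by
    refine le_min ?_ ?_
    · calc ∑ u, 1 / 3 * upperPot (r - Pi.single u 1) ≤ ∑ u : Fin 3, 1 / 3 * (total r - 1) :=
            sum_le_sum fun u _ => by
              gcongr; exact (upperPot_sub_single (hr u)).trans_le (min_le_left _ _)
        _ ≤ total r := by simp
    · refine le_trans (sum_le_sum fun u _ => ?_) hjensen
      gcongr; exact (upperPot_sub_single (hr u)).trans_le (min_le_right _ _)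
  linarith

lemma exists_move_upperPot_le (hr : r ≠ 0) :
    ∃ p, IsMove r p ∧ C3.payoff p + ∑ u, p u * upperPot (r - Pi.single u 1) ≤ upperPot r := by
  by_cases hz : ∃ v, r v = 0
  · obtain ⟨v, hv⟩ := hz
    obtain ⟨u, hu⟩ := Function.ne_iff.1 hr
    exact ⟨_, Digraph'.isMove_single hu, upperPot_step_of_eq_zero hu hv⟩
  · simp only [not_exists] at hz
    exact ⟨_, ⟨fun _ => by norm_num, by simp, fun v _ => hz v⟩, upperPot_step_of_forall_ne_zero hz⟩

lemma value_le_upperPot (r : Fin 3 → ℕ) : C3.value r ≤ upperPot r :=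
  C3.value_le_of_potential upperPot upperPot_nonneg (fun _ hr => exists_move_upperPot_le hr) r

lemma imbalance_div_six_le (hp : IsMove r p) :
    imbalance r / 6 ≤ C3.payoff p + ∑ u, p u * (imbalance (r - Pi.single u 1) / 6) := by
  obtain ⟨w, hw⟩ := exists_eq_minCoord r
  have hsum : ∑ u, p u * ((imbalance r - 1 + if w = u then 3 else 0) / 6)
      ≤ ∑ u, p u * (imbalance (r - Pi.single u 1) / 6) :=
    hp.sum_mul_le_sum_mul fun u hu => by gcongr; exact imbalance_sub_single_ge hu hw
  have heq : ∑ u, p u * ((imbalance r - 1 + if w = u then 3 else 0) / 6)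
      = (imbalance r - 1) / 6 + p w / 2 := by
    simp only [add_div, mul_add, sum_add_distrib, ← sum_mul, hp.sum_eq_one]
    simp [ite_div]
    ring
  have hP := abs_le.1 (abs_sub_third_le_payoff hp.sum_eq_one w)
  have := C3.payoff_nonneg hp
  linarith

lemma abs_sum_mul_deficit_le (hp : IsMove r p) :
    |∑ u, p u * deficit r u| ≤ 6 * C3.payoff p * imbalance r :=
  calc |∑ u, p u * deficit r u| = |∑ u, (p u - 1 / 3) * deficit r u| := by
        simp [sub_mul, sum_sub_distrib, ← mul_sum, sum_deficit]
    _ ≤ ∑ u, |(p u - 1 / 3) * deficit r u| := abs_sum_le_sum_abs _ _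
    _ ≤ ∑ _u : Fin 3, C3.payoff p * (2 * imbalance r) := sum_le_sum fun u _ => by
        rw [abs_mul]
        exact mul_le_mul (abs_sub_third_le_payoff hp.sum_eq_one u) (abs_deficit_le r u)
          (abs_nonneg _) (C3.payoff_nonneg hp)
    _ = 6 * C3.payoff p * imbalance r := by simp; ring

lemma sqrt_energy_div_twelve_le (hr : r ≠ 0) (hp : IsMove r p)
    (himb : 2 * imbalance r ≤ √(energy r)) :
    √(energy r) / 12 ≤ C3.payoff p + ∑ u, p u * (√(energy (r - Pi.single u 1)) / 12) := by
  set t := √(energy r)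
  have henergy : 0 < energy r := add_pos_of_pos_of_nonneg (total_pos hr) (spread_nonneg r)
  have ht : 0 < t := Real.sqrt_pos.2 henergy
  have hP := C3.payoff_nonneg hp
  have hdrift : -(3 * C3.payoff p) ≤ (∑ u, p u * deficit r u) / t := by
    rw [le_div_iff₀ ht]
    nlinarith [neg_abs_le (∑ u, p u * deficit r u), abs_sum_mul_deficit_le hp]
  have hmean : ∑ u, p u * ((t + deficit r u / t) / 12)
      = (t + (∑ u, p u * deficit r u) / t) / 12 := by
    simp only [mul_div_assoc', mul_add, sum_add_distrib, ← sum_div, ← sum_mul, hp.sum_eq_one]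
    ring
  have hstep (u : Fin 3) (hu : r u ≠ 0) :
      (t + deficit r u / t) / 12 ≤ √(energy (r - Pi.single u 1)) / 12 := by
    rw [energy_sub_single hu, ← Real.sq_sqrt henergy.le]
    gcongr
    exact add_div_le_sqrt ht ((abs_deficit_le r u).trans himb)
  calc t / 12 ≤ C3.payoff p + ∑ u, p u * ((t + deficit r u / t) / 12) := by rw [hmean]; linarith
    _ ≤ _ := add_le_add le_rfl (hp.sum_mul_le_sum_mul hstep)

noncomputable def lowerPot (r : Fin 3 → ℕ) : ℝ := max (√(energy r) / 12) (imbalance r / 6)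

lemma lowerPot_le_payoff_add (hr : r ≠ 0) (hp : IsMove r p) :
    lowerPot r ≤ C3.payoff p + ∑ u, p u * lowerPot (r - Pi.single u 1) := by
  have hmono : ∀ f : (Fin 3 → ℕ) → ℝ, (∀ r, f r ≤ lowerPot r) →
      ∑ u, p u * f (r - Pi.single u 1) ≤ ∑ u, p u * lowerPot (r - Pi.single u 1) := fun f hf =>
    hp.sum_mul_le_sum_mul fun u _ => hf _
  have himb := (imbalance_div_six_le hp).trans
    (add_le_add le_rfl (hmono (fun r => imbalance r / 6) fun _ => le_max_right _ _))
  refine max_le ?_ himb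
  by_cases h : 2 * imbalance r ≤ √(energy r)
  · exact (sqrt_energy_div_twelve_le hr hp h).trans
      (add_le_add le_rfl (hmono (fun r => √(energy r) / 12) fun _ => le_max_left _ _))
  · linarith

lemma lowerPot_le_value (r : Fin 3 → ℕ) : lowerPot r ≤ C3.value r :=
  C3.le_value_of_potential lowerPot (by simp [lowerPot, energy, total, spread, imbalance, minCoord])
    (fun _ hr _ hp => lowerPot_le_payoff_add hr hp) r

lemma total_const (n : ℕ) : total (fun _ => n) = 3 * n := by simp [total]

lemma spread_const (n : ℕ) : spread (fun _ => n) = 0 := by simp [spread]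

end RPS

theorem semiRestrictedRPS_value_sqrt :
    ∃ c C : ℝ, 0 < c ∧ 0 < C ∧ ∀ n : ℕ, 1 ≤ n →
      c * Real.sqrt n ≤ C3.value (fun _ => n) ∧
      C3.value (fun _ => n) ≤ C * Real.sqrt n := by
  refine ⟨1 / 12, √12, by norm_num, by positivity, fun n _ => ⟨?_, ?_⟩⟩
  · calc 1 / 12 * √n ≤ √(RPS.energy (fun _ => n)) / 12 := by
          rw [RPS.energy, RPS.total_const, RPS.spread_const]
          have : √(n : ℝ) ≤ √(3 * n + 0) := Real.sqrt_le_sqrt (by linarith [n.cast_nonneg (α := ℝ)])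
          linarith
      _ ≤ RPS.lowerPot (fun _ => n) := le_max_left _ _
      _ ≤ C3.value (fun _ => n) := RPS.lowerPot_le_value _
  · calc C3.value (fun _ => n) ≤ RPS.upperPot (fun _ => n) := RPS.value_le_upperPot _
      _ ≤ √(4 * RPS.total (fun _ => n) + 2 * RPS.spread (fun _ => n)) := min_le_right _ _
      _ = √12 * √n := by
        rw [RPS.total_const, RPS.spread_const, ← Real.sqrt_mul (by norm_num)]
        ring_nf
end

section
/- Let D be a digraph on k vertices such that the real nullspace of its skew adjacency matrix A_D equals the span of the all-ones vector. Then there exists a constant α > 0 such that for every probability vector p indexed by V(D), max_{v ∈ V(D)} ( Σ_{u ∈ N^+(v)} p_u − Σ_{u ∈ N^-(v)} p_u ) ≥ α · max_{v ∈ V(D)} |p_v − 1/k|. -/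
/-!
Write `A` for the skew adjacency matrix and `k = |V|`. The payoff of `p` is the largest entry of
`A p`, and the entries of `A p` sum to zero because `A` is skew-symmetric and kills the constants;
hence `‖A p‖∞ ≤ k · payoff p`. Since `A p = A (p - 1/k)` and `A` is injective on the sum-zero
hyperplane (its kernel is the constants), finite-dimensionality gives a `K` with
`‖p - 1/k‖∞ ≤ K ‖A p‖∞`, so `α = 1 / (K k)` works.
-/

open Finset

open Matrix

theorem LinearMap.exists_norm_le_mul_norm_of_ker_inf_ker_eq_bot {𝕜 E F G : Type*}
    [NontriviallyNormedField 𝕜] [CompleteSpace 𝕜]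
    [NormedAddCommGroup E] [NormedSpace 𝕜 E] [FiniteDimensional 𝕜 E]
    [NormedAddCommGroup F] [NormedSpace 𝕜 F] [NormedAddCommGroup G] [NormedSpace 𝕜 G]
    (f : E →ₗ[𝕜] F) (g : E →ₗ[𝕜] G) (h : LinearMap.ker f ⊓ LinearMap.ker g = ⊥) :
    ∃ K : ℝ, 0 < K ∧ ∀ x, g x = 0 → ‖x‖ ≤ K * ‖f x‖ := by
  obtain ⟨K, hK, hanti⟩ := (f.prod g).exists_antilipschitzWith (by rw [LinearMap.ker_prod, h])
  refine ⟨K, hK, fun x hx => ?_⟩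
  simpa [hx] using hanti.le_mul_dist x 0

theorem Matrix.ker_mulVecLin_inf_ker_sum_eq_bot {V : Type*} [Fintype V] (A : Matrix V V ℝ)
    (hker : ∀ x, A *ᵥ x = 0 → ∃ c : ℝ, x = fun _ => c) :
    LinearMap.ker A.mulVecLin ⊓ LinearMap.ker (Fintype.linearCombination ℝ fun _ : V => (1 : ℝ))
      = ⊥ := by
  refine (Submodule.eq_bot_iff _).2 fun x ⟨hAx, hsum⟩ => ?_
  obtain ⟨c, rfl⟩ := hker x hAx
  have : Fintype.card V * c = 0 := by simpa [Fintype.linearCombination_apply] using hsum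
  funext v
  have : (Fintype.card V : ℝ) ≠ 0 := Nat.cast_ne_zero.2 (Fintype.card_pos_iff.2 ⟨v⟩).ne'
  simp_all

theorem Matrix.sum_mulVec_eq_zero_of_transpose_eq_neg {V : Type*} [Fintype V] {A : Matrix V V ℝ}
    (hskew : Aᵀ = -A) (hconst : A *ᵥ (fun _ => 1) = 0) (x : V → ℝ) :
    ∑ v, (A *ᵥ x) v = 0 := by
  have : (fun _ => 1 : V → ℝ) ᵥ* A = 0 := by
    rw [← Matrix.mulVec_transpose, hskew, Matrix.neg_mulVec, hconst, neg_zero]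
  simpa [this, dotProduct] using Matrix.dotProduct_mulVec (fun _ => 1) A x

theorem norm_le_card_mul_of_sum_eq_zero {V : Type*} [Fintype V] {y : V → ℝ} {M : ℝ}
    (hsum : ∑ v, y v = 0) (hM : ∀ v, y v ≤ M) : ‖y‖ ≤ Fintype.card V * M := by
  classical
  have hkM : 0 ≤ Fintype.card V * M := by
    simpa [hsum] using Finset.sum_le_sum fun v (_ : v ∈ univ) => hM v
  refine (pi_norm_le_iff_of_nonneg hkM).2 fun v => ?_
  have hk : 1 ≤ Fintype.card V := Fintype.card_pos_iff.2 ⟨v⟩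
  have hrest : -y v ≤ (Fintype.card V - 1) * M := by
    calc -y v = ∑ u ∈ univ.erase v, y u := by
          linarith [Finset.add_sum_erase univ y (mem_univ v)]
      _ ≤ ∑ _u ∈ univ.erase v, M := Finset.sum_le_sum fun u _ => hM u
      _ = (Fintype.card V - 1) * M := by
          simp [Finset.card_erase_of_mem, Nat.cast_sub hk]
  rw [Real.norm_eq_abs, abs_le]
  have : (1 : ℝ) ≤ Fintype.card V := by exact_mod_cast hk
  constructor <;> nlinarith [hM v]

namespace Digraph'

theorem skewAdj_transpose {V : Type} (D : Digraph' V) : D.skewAdjᵀ = -D.skewAdj := by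
  ext u v
  rw [transpose_apply, Matrix.neg_apply]
  unfold skewAdj
  cases h : D.Adj u v
  · cases D.Adj v u <;> simp
  · simp [D.asymm u v h]

variable {V : Type} [Fintype V] (D : Digraph' V)

theorem mulVec_skewAdj_apply (p : V → ℝ) (v : V) :
    (D.skewAdj *ᵥ p) v = (∑ u ∈ D.outN v, p u) - ∑ u ∈ D.inN v, p u := by
  simp only [outN, inN, sum_filter, mulVec, dotProduct, ← sum_sub_distrib]
  refine sum_congr rfl fun u _ => ?_
  simp only [skewAdj]
  cases h : D.Adj v u
  · cases D.Adj u v <;> simp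
  · simp [D.asymm v u h]

theorem payoff_eq_sSup_range_mulVec (p : V → ℝ) :
    D.payoff p = sSup (Set.range (D.skewAdj *ᵥ p)) := by
  simp only [payoff, ← mulVec_skewAdj_apply]

theorem norm_skewAdj_mulVec_le (hconst : D.skewAdj *ᵥ (fun _ => 1) = 0) (p : V → ℝ) :
    ‖D.skewAdj *ᵥ p‖ ≤ Fintype.card V * D.payoff p := by
  refine norm_le_card_mul_of_sum_eq_zero
    (sum_mulVec_eq_zero_of_transpose_eq_neg D.skewAdj_transpose hconst p) fun v => ?_
  rw [payoff_eq_sSup_range_mulVec]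
  exact le_csSup (Set.finite_range _).bddAbove ⟨v, rfl⟩

end Digraph'

theorem payoff_lower_bound_of_trivial_nullspace_general {V : Type} [Fintype V]
    [Nonempty V] (D : Digraph' V)
    (hnull : ∀ x : V → ℝ, D.skewAdj.mulVec x = 0 ↔ ∃ c : ℝ, x = fun _ => c) :
    ∃ α : ℝ, 0 < α ∧ ∀ p : V → ℝ, (∀ u, 0 ≤ p u) → (∑ u, p u = 1) →
      α * sSup (Set.range fun v => |p v - 1 / (Fintype.card V : ℝ)|) ≤ D.payoff p := by
  set k : ℝ := (Fintype.card V : ℝ)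
  have hk : 0 < k := Nat.cast_pos.2 Fintype.card_pos
  obtain ⟨K, hK, hinj⟩ := D.skewAdj.mulVecLin.exists_norm_le_mul_norm_of_ker_inf_ker_eq_bot _
    (D.skewAdj.ker_mulVecLin_inf_ker_sum_eq_bot fun x => (hnull x).1)
  refine ⟨1 / (K * k), by positivity, fun p _ hp => ?_⟩
  set q : V → ℝ := p - fun _ => 1 / k
  have hq : Fintype.linearCombination ℝ (fun _ : V => (1 : ℝ)) q = 0 := by
    simp [q, Fintype.linearCombination_apply, sum_sub_distrib, hp, k, hk.ne']
  have hAq : D.skewAdj *ᵥ q = D.skewAdj *ᵥ p := by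
    rw [mulVec_sub, (hnull _).2 ⟨1 / k, rfl⟩, sub_zero]
  have hdev : sSup (Set.range fun v => |p v - 1 / k|) ≤ ‖q‖ :=
    csSup_le (Set.range_nonempty _) fun _ ⟨v, hv⟩ => hv ▸ norm_le_pi_norm q v
  rw [div_mul_eq_mul_div, one_mul, div_le_iff₀ (by positivity)]
  calc sSup (Set.range fun v => |p v - 1 / k|)
      ≤ K * ‖D.skewAdj *ᵥ p‖ := hdev.trans (hAq ▸ hinj q hq)
    _ ≤ K * (k * D.payoff p) := by
        gcongr
        exact D.norm_skewAdj_mulVec_le ((hnull _).2 ⟨1, rfl⟩) p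
    _ = D.payoff p * (K * k) := by ring

theorem payoff_lower_bound_of_trivial_nullspace {V : Type} [Fintype V] [DecidableEq V]
    [Nonempty V] (D : Digraph' V)
    (hnull : ∀ x : V → ℝ, D.skewAdj.mulVec x = 0 ↔ ∃ c : ℝ, x = fun _ => c) :
    ∃ α : ℝ, 0 < α ∧ ∀ p : V → ℝ, (∀ u, 0 ≤ p u) → (∑ u, p u = 1) →
      α * sSup (Set.range fun v => |p v - 1 / (Fintype.card V : ℝ)|) ≤ D.payoff p :=
  payoff_lower_bound_of_trivial_nullspace_general D hnull
end
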